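/- Let s ∈ (0,1), p ∈ [1,∞), and let X, X̂ be ℝ^d-valued random variables with bounded densities p_X, p_X̂. Then for every essentially bounded f ∈ W^{s,p}(ℝ^d) and every q ∈ (0,∞), E[|f(X) − f(X̂)|^q] ≤ C_{W^{s,p}} · (E[|X − X̂|^{qs}])^{p/(q+p)}, where C_{W^{s,p}} = (2K₀(s,p))^q + (2‖f‖_∞)^q A₁(‖p_X‖_∞ + ‖p_X̂‖_∞) ‖(G_{s,p}f)^p‖_{L¹(ℝ^d)}. -/

import Mathlib

open MeasureTheory Metric Filter Set
open scoped ENNReal Topology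

noncomputable section

abbrev Euc (d : ℕ) := EuclideanSpace ℝ (Fin d)

/-- Hardy--Littlewood maximal function of a measure. -/
def maximal {d : ℕ} (ν : Measure (Euc d)) (x : Euc d) : ℝ≥0∞ :=
  ⨆ (s : ℝ) (_ : 0 < s), ν (closedBall x s) / volume (closedBall x s)

/-- Restricted Hardy--Littlewood maximal function of a measure. -/
def maximalR {d : ℕ} (R : ℝ) (ν : Measure (Euc d)) (x : Euc d) : ℝ≥0∞ :=
  ⨆ (s : ℝ) (_ : s ∈ Set.Ioc 0 R), ν (closedBall x s) / volume (closedBall x s)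

/-- The Gagliardo operator `G_{s,p} f (x) = (∫ |f x − f y|^p / |x−y|^{d+sp} dy)^{1/p}`. -/
def Gsp (d : ℕ) (s p : ℝ) (f : Euc d → ℝ) (x : Euc d) : ℝ≥0∞ :=
  (∫⁻ y, ENNReal.ofReal (|f x - f y| ^ p / dist x y ^ ((d : ℝ) + s * p)) ∂volume) ^ (1 / p)

/-!
For a level `λ > 0`, the pointwise estimate together with Jensen's inequality
`M_R (G f) ≤ M ((G f)^p)^{1/p}` makes `f` Hölder with constant `2 K₀ λ^{1/p}` on almost every
pair of points of the good set `{M ((G f)^p) ≤ λ}`. Since `(X, X̂)` need not have a density,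
this is upgraded to a Hölder bound on all pairs outside an exceptional set of measure at most
`|{M ((G f)^p) > λ}|`: a good point `x'` in the support of Lebesgue measure restricted to the good
set is approached by good points `y` for which both `(x, y)` and `(x', y)` are admissible. Off the
exceptional set the integrand is at most `(2K₀)^q λ^{q/p} |X − X̂|^{qs}`; the event that `X` or
`X̂` falls into it has probability at most `(‖p_X‖_∞ + ‖p_X̂‖_∞) A₁ ‖(G f)^p‖₁ / λ` by the weak (1,1)
bound, and there the integrand is at most `(2‖f‖_∞)^q`. The choice
`λ = E[|X − X̂|^{qs}]^{−p/(q+p)}` balances the two terms.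
-/

open scoped NNReal

theorem Gsp_congr_ae {d : ℕ} {s p : ℝ} {f g : Euc d → ℝ} (h : f =ᵐ[volume] g) :
    Gsp d s p f =ᵐ[volume] Gsp d s p g := by
  filter_upwards [h] with x hx
  unfold Gsp
  congr 1
  refine lintegral_congr_ae ?_
  filter_upwards [h] with y hy
  rw [hx, hy]

theorem measurable_Gsp {d : ℕ} {s p : ℝ} {f : Euc d → ℝ} (hf : Measurable f) :
    Measurable (Gsp d s p f) := by
  refine Measurable.pow_const (Measurable.lintegral_prod_right ?_) _
  exact ((((hf.comp measurable_fst).sub (hf.comp measurable_snd)).abs.pow_const _).div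
    (measurable_dist.pow_const _)).ennreal_ofReal

theorem aemeasurable_Gsp {d : ℕ} {s p : ℝ} {f : Euc d → ℝ} (hf : AEMeasurable f) :
    AEMeasurable (Gsp d s p f) :=
  ⟨_, measurable_Gsp hf.measurable_mk, Gsp_congr_ae hf.ae_eq_mk⟩

theorem laverage_le_rpow_laverage_rpow {α : Type*} [MeasurableSpace α] {μ : Measure α}
    [IsFiniteMeasure μ] {p : ℝ} (hp : 1 ≤ p) {G : α → ℝ≥0∞} (hG : AEMeasurable G μ) :
    ⨍⁻ x, G x ∂μ ≤ (⨍⁻ x, G x ^ p ∂μ) ^ (1 / p) := by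
  rcases eq_zero_or_neZero μ with rfl | _
  · simp
  have := eLpNorm'_le_eLpNorm'_of_exponent_le one_pos hp ((μ univ)⁻¹ • μ)
    (hG.smul_measure _).aestronglyMeasurable
  simpa [eLpNorm'_eq_lintegral_enorm, laverage_eq'] using this

theorem maximalR_withDensity_le {d : ℕ} {p : ℝ} (hp : 1 ≤ p) {G : Euc d → ℝ≥0∞}
    (hG : AEMeasurable G) (R : ℝ) (x : Euc d) :
    maximalR R (volume.withDensity G) x
      ≤ maximal (volume.withDensity fun z => G z ^ p) x ^ (1 / p) := by
  refine iSup₂_le fun r hr => ?_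
  have : IsFiniteMeasure (volume.restrict (closedBall x r)) :=
    isFiniteMeasure_restrict.2 measure_closedBall_lt_top.ne
  have hball (g : Euc d → ℝ≥0∞) : volume.withDensity g (closedBall x r) / volume (closedBall x r)
      = ⨍⁻ z in closedBall x r, g z ∂volume := by
    rw [withDensity_apply _ measurableSet_closedBall, setLAverage_eq]
  calc _ = ⨍⁻ z in closedBall x r, G z ∂volume := hball G
    _ ≤ (⨍⁻ z in closedBall x r, G z ^ p ∂volume) ^ (1 / p) :=
      laverage_le_rpow_laverage_rpow hp hG.restrict
    _ ≤ _ := by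
      rw [← hball]
      gcongr
      exact le_iSup₂_of_le r hr.1 le_rfl

theorem edist_le_of_maximal_le {d : ℕ} {p : ℝ} (hp : 1 ≤ p) {G : Euc d → ℝ≥0∞}
    (hG : AEMeasurable G) {f : Euc d → ℝ} {K r lam : ℝ≥0} {x y : Euc d}
    (hx : maximal (volume.withDensity fun z => G z ^ p) x ≤ lam)
    (hy : maximal (volume.withDensity fun z => G z ^ p) y ≤ lam)
    (hxy : ENNReal.ofReal |f x - f y| ≤ ENNReal.ofReal (K * dist x y ^ (r : ℝ)) *
      (maximalR (2 * dist x y) (volume.withDensity G) x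
        + maximalR (2 * dist x y) (volume.withDensity G) y)) :
    edist (f x) (f y) ≤ (2 * K * lam ^ (1 / p) : ℝ≥0) * edist x y ^ (r : ℝ) := by
  have hM {w} (hw : maximal (volume.withDensity fun z => G z ^ p) w ≤ lam) :
      maximalR (2 * dist x y) (volume.withDensity G) w ≤ (lam : ℝ≥0∞) ^ (1 / p) :=
    (maximalR_withDensity_le hp hG _ w).trans (by gcongr)
  rw [edist_dist, Real.dist_eq]
  calc _ ≤ _ := hxy
    _ ≤ ENNReal.ofReal (K * dist x y ^ (r : ℝ)) * ((lam : ℝ≥0∞) ^ (1 / p) + lam ^ (1 / p)) := by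
      gcongr <;> exact hM ‹_›
    _ = _ := by
      rw [ENNReal.ofReal_mul K.coe_nonneg,
        ← ENNReal.ofReal_rpow_of_nonneg dist_nonneg r.coe_nonneg, ← edist_dist, ENNReal.coe_mul,
        ENNReal.coe_rpow_of_nonneg _ (by positivity)]
      simp only [ENNReal.ofReal_coe_nnreal, ENNReal.coe_mul, ENNReal.coe_ofNat]
      ring

theorem support_restrict_subset_of_ae {X : Type*} [TopologicalSpace X] [MeasurableSpace X]
    [OpensMeasurableSpace X] {μ : Measure X} {A S : Set X} (hS : IsClosed S)
    (h : ∀ᵐ y ∂μ, y ∈ A → y ∈ S) : (μ.restrict A).support ⊆ S := by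
  refine Measure.support_subset_of_isClosed hS ?_
  rw [mem_ae_iff, Measure.restrict_apply hS.isOpen_compl.measurableSet]
  refine measure_mono_null ?_ (ae_iff.1 h)
  rintro y ⟨hyS, hyA⟩ hAS
  exact hyS (hAS hyA)

section Holder

variable {X : Type*} [PseudoEMetricSpace X] [MeasurableSpace X] [OpensMeasurableSpace X]
  {μ : Measure X}

variable {Y : Type*} [PseudoEMetricSpace Y] {f : X → Y} {C r : ℝ≥0}

theorem edist_le_of_mem_support_restrict (hr : 0 < r) {A : Set X} {x x' : X}
    (hx' : x' ∈ (μ.restrict A).support)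
    (h : ∀ᵐ y ∂μ, y ∈ A → edist (f x) (f y) ≤ C * edist x y ^ (r : ℝ)
      ∧ edist (f x') (f y) ≤ C * edist x' y ^ (r : ℝ)) :
    edist (f x) (f x') ≤ C * edist x x' ^ (r : ℝ) := by
  set φ : X → ℝ≥0∞ := fun y => C * (edist x y ^ (r : ℝ) + edist x' y ^ (r : ℝ))
  have hφ : Continuous φ := by
    refine (ENNReal.continuous_const_mul ENNReal.coe_ne_top).comp (Continuous.add ?_ ?_) <;>
      exact (ENNReal.continuous_rpow_const).comp (continuous_const.edist continuous_id)
  have hx'φ : edist (f x) (f x') ≤ φ x' := by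
    refine support_restrict_subset_of_ae (isClosed_le continuous_const hφ) ?_ hx'
    filter_upwards [h] with y hy hyA
    calc edist (f x) (f x') ≤ edist (f x) (f y) + edist (f x') (f y) := edist_triangle_right _ _ _
      _ ≤ φ y := by simp only [φ, mul_add]; exact add_le_add (hy hyA).1 (hy hyA).2
  simpa [φ, hr] using hx'φ

variable [HereditarilyLindelofSpace X]

theorem exists_measure_le_holderOnWith_compl (hr : 0 < r) {A : Set X}
    (h : ∀ᵐ x ∂μ, ∀ᵐ y ∂μ, x ∈ A → y ∈ A → edist (f x) (f y) ≤ C * edist x y ^ (r : ℝ)) :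
    ∃ T, MeasurableSet T ∧ μ T ≤ μ Aᶜ ∧ HolderOnWith C r f Tᶜ := by
  set N := {x | ¬ ∀ᵐ y ∂μ, x ∈ A → y ∈ A → edist (f x) (f y) ≤ C * edist x y ^ (r : ℝ)}
  have hsupp : μ (A ∩ (μ.restrict A).supportᶜ) = 0 := by
    rw [inter_comm, ← Measure.restrict_apply Measure.isOpen_compl_support.measurableSet]
    exact Measure.measure_compl_support
  set B := Aᶜ ∪ ((A ∩ (μ.restrict A).supportᶜ) ∪ N)
  refine ⟨toMeasurable μ B, measurableSet_toMeasurable _ _, ?_, fun x hx x' hx' => ?_⟩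
  · rw [measure_toMeasurable]
    exact (measure_union_le _ _).trans (by rw [measure_union_null hsupp (ae_iff.1 h), add_zero])
  have hgood {z} (hz : z ∉ toMeasurable μ B) :
      z ∈ A ∧ z ∈ (μ.restrict A).support ∧ z ∉ N := by
    have := mt (subset_toMeasurable μ _ ·) hz
    simp only [B, mem_union, mem_compl_iff, mem_inter_iff, not_or, not_and, not_not] at this
    exact ⟨this.1, this.2.1 this.1, this.2.2⟩
  obtain ⟨hxA, -, hxN⟩ := hgood hx
  obtain ⟨hx'A, hx'supp, hx'N⟩ := hgood hx'
  refine edist_le_of_mem_support_restrict hr hx'supp ?_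
  filter_upwards [not_not.1 hxN, not_not.1 hx'N] with y hy hy' hyA
  exact ⟨hy hxA hyA, hy' hx'A hyA⟩

end Holder

section Probability

variable {Ω α : Type*} [MeasurableSpace Ω] [MeasurableSpace α] {P : Measure Ω}

theorem measure_preimage_le_essSup_mul {μ : Measure α} [SFinite μ] {X : Ω → α}
    (hX : AEMeasurable X P) {ρ : α → ℝ≥0∞} (hρ : P.map X = μ.withDensity ρ) (T : Set α) :
    P (X ⁻¹' T) ≤ essSup ρ μ * μ T :=
  calc P (X ⁻¹' T) ≤ P.map X T := Measure.le_map_apply hX T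
    _ = ∫⁻ x in T, ρ x ∂μ := by rw [hρ, withDensity_apply']
    _ ≤ ∫⁻ _ in T, essSup ρ μ ∂μ := lintegral_mono_ae (ae_restrict_of_ae ae_le_essSup)
    _ = essSup ρ μ * μ T := setLIntegral_const T _

theorem measure_preimage_union_le_essSup_add_mul {μ : Measure α} [SFinite μ] {X Xh : Ω → α}
    (hX : AEMeasurable X P) (hXh : AEMeasurable Xh P) {ρ ρh : α → ℝ≥0∞}
    (hρ : P.map X = μ.withDensity ρ) (hρh : P.map Xh = μ.withDensity ρh) (T : Set α) :
    P (X ⁻¹' T ∪ Xh ⁻¹' T) ≤ (essSup ρ μ + essSup ρh μ) * μ T :=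
  (measure_union_le _ _).trans <| by
    rw [add_mul]
    exact add_le_add (measure_preimage_le_essSup_mul hX hρ T)
      (measure_preimage_le_essSup_mul hXh hρh T)

theorem ae_edist_comp_le {E : Type*} [NormedAddCommGroup E] {μ : Measure α} {f : α → E}
    (hf : eLpNorm f ⊤ μ ≠ ∞) {X Xh : Ω → α} (hX : AEMeasurable X P) (hXh : AEMeasurable Xh P)
    (hXμ : P.map X ≪ μ) (hXhμ : P.map Xh ≪ μ) :
    ∀ᵐ ω ∂P, edist (f (X ω)) (f (Xh ω)) ≤ ENNReal.ofReal (2 * (eLpNorm f ⊤ μ).toReal) := by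
  have hfμ : ∀ᵐ x ∂μ, ‖f x‖ₑ ≤ eLpNorm f ⊤ μ := by
    rw [eLpNorm_exponent_top]; exact ae_le_eLpNormEssSup
  filter_upwards [ae_of_ae_map hX (hXμ.ae_le hfμ), ae_of_ae_map hXh (hXhμ.ae_le hfμ)] with ω h h'
  calc edist (f (X ω)) (f (Xh ω)) ≤ ‖f (X ω)‖ₑ + ‖f (Xh ω)‖ₑ := by
        rw [edist_eq_enorm_sub]; exact enorm_sub_le
    _ ≤ 2 * eLpNorm f ⊤ μ := by rw [two_mul]; exact add_le_add h h'
    _ = _ := by rw [ENNReal.ofReal_mul zero_le_two, ENNReal.ofReal_toReal hf, ENNReal.ofReal_ofNat]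

theorem ae_eq_of_lintegral_edist_rpow_eq_zero [EMetricSpace α] [OpensMeasurableSpace α]
    [SecondCountableTopology α] {X Xh : Ω → α} (hX : Measurable X) (hXh : Measurable Xh)
    {t : ℝ} (ht : 0 < t) (h : ∫⁻ ω, edist (X ω) (Xh ω) ^ t ∂P = 0) : X =ᵐ[P] Xh := by
  filter_upwards [(lintegral_eq_zero_iff ((hX.edist hXh).pow_const t)).1 h] with ω hω
  simpa [ENNReal.rpow_eq_zero_iff, ht, not_lt_of_gt ht] using hω

theorem lintegral_edist_rpow_le_of_holderOnWith [PseudoEMetricSpace α] {Y : Type*}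
    [PseudoEMetricSpace Y] {X Xh : Ω → α} (hX : Measurable X) (hXh : Measurable Xh)
    {f : α → Y} {T : Set α} (hT : MeasurableSet T) {C r : ℝ≥0} (hf : HolderOnWith C r f Tᶜ)
    {M : ℝ≥0∞} (hM : ∀ᵐ ω ∂P, edist (f (X ω)) (f (Xh ω)) ≤ M) {q : ℝ} (hq : 0 ≤ q) :
    ∫⁻ ω, edist (f (X ω)) (f (Xh ω)) ^ q ∂P
      ≤ (C : ℝ≥0∞) ^ q * ∫⁻ ω, edist (X ω) (Xh ω) ^ (q * r) ∂P
        + M ^ q * P (X ⁻¹' T ∪ Xh ⁻¹' T) := by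
  set U := X ⁻¹' T ∪ Xh ⁻¹' T
  have hU : MeasurableSet U := (hX hT).union (hXh hT)
  have hpt : ∀ᵐ ω ∂P, edist (f (X ω)) (f (Xh ω)) ^ q
      ≤ (C : ℝ≥0∞) ^ q * edist (X ω) (Xh ω) ^ (q * r) + U.indicator (fun _ => M ^ q) ω := by
    filter_upwards [hM] with ω hω
    by_cases hωU : ω ∈ U
    · rw [indicator_of_mem hωU]
      exact le_add_left (by gcongr)
    · rw [indicator_of_notMem hωU, add_zero, mul_comm q, ENNReal.rpow_mul,
        ← ENNReal.mul_rpow_of_nonneg _ _ hq]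
      simp only [U, mem_union, mem_preimage, not_or] at hωU
      gcongr
      exact hf _ hωU.1 _ hωU.2
  calc _ ≤ ∫⁻ ω, ((C : ℝ≥0∞) ^ q * edist (X ω) (Xh ω) ^ (q * r)
        + U.indicator (fun _ => M ^ q) ω) ∂P := lintegral_mono_ae hpt
    _ = _ := by
      rw [lintegral_add_right _ (measurable_const.indicator hU),
        lintegral_const_mul' _ _ (by simp [hq]), lintegral_indicator_const hU]

end Probability

theorem coe_mul_rpow_one_div_rpow (c : ℝ≥0) {lam : ℝ≥0} (hlam : lam ≠ 0) {p q : ℝ} (hq : 0 ≤ q) :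
    ((c * lam ^ (1 / p) : ℝ≥0) : ℝ≥0∞) ^ q = ENNReal.ofReal (c ^ q) * (lam : ℝ≥0∞) ^ (q / p) := by
  rw [← ENNReal.coe_rpow_of_nonneg _ hq, NNReal.mul_rpow, ← NNReal.rpow_mul, one_div_mul_eq_div,
    ENNReal.coe_mul, ← ENNReal.coe_rpow_of_ne_zero hlam, ← ENNReal.ofReal_coe_nnreal,
    NNReal.coe_rpow]

theorem le_add_mul_rpow_of_forall_le {x a b E : ℝ≥0∞} {p q : ℝ} (hp : 0 < p) (hq : 0 < q)
    (ha : a ≠ 0) (hE : E ≠ 0)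
    (h : ∀ lam : ℝ≥0, 0 < lam → x ≤ a * (lam : ℝ≥0∞) ^ (q / p) * E + b / lam) :
    x ≤ (a + b) * E ^ (p / (q + p)) := by
  obtain rfl | hEt := eq_or_ne E ∞
  · rw [ENNReal.top_rpow_of_pos (by positivity), ENNReal.mul_top (by simp [ha])]
    exact le_top
  have hlam : ((E.toNNReal ^ (-(p / (q + p))) : ℝ≥0) : ℝ≥0∞) = E ^ (-(p / (q + p))) := by
    rw [ENNReal.coe_rpow_of_ne_zero (by simp [ENNReal.toNNReal_eq_zero_iff, hE, hEt]),
      ENNReal.coe_toNNReal hEt]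
  refine (h _ (NNReal.rpow_pos (p := -(p / (q + p))) (ENNReal.toNNReal_pos hE hEt))).trans_eq ?_
  have hpow : (E ^ (-(p / (q + p)))) ^ (q / p) * E = E ^ (p / (q + p)) := by
    rw [← ENNReal.rpow_mul]
    nth_rewrite 2 [← ENNReal.rpow_one E]
    rw [← ENNReal.rpow_add _ _ hE hEt]
    congr 1
    field_simp
    ring
  rw [hlam, mul_assoc, hpow, ENNReal.rpow_neg, div_eq_mul_inv b, inv_inv, add_mul]

theorem stmt_12_general {d : ℕ} {Ω : Type*} [MeasurableSpace Ω] (P : Measure Ω)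
    (s p q : ℝ) (hs0 : 0 < s) (hp : 1 ≤ p) (hq : 0 < q)
    (X Xh : Ω → Euc d) (hX : Measurable X) (hXh : Measurable Xh)
    (pX pXh : Euc d → ℝ≥0∞)
    (hdX : P.map X = volume.withDensity pX)
    (hdXh : P.map Xh = volume.withDensity pXh)
    (f : Euc d → ℝ) (hfLp : MemLp f (ENNReal.ofReal p) volume)
    (hfb : eLpNorm f ⊤ volume ≠ ∞)
    (K₀ A₁ : ℝ) (hK₀ : 0 < K₀)
    (hpt : ∀ᵐ x ∂(volume : Measure (Euc d)), ∀ᵐ y ∂(volume : Measure (Euc d)),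
      ENNReal.ofReal |f x - f y|
        ≤ ENNReal.ofReal (K₀ * dist x y ^ s)
          * (maximalR (2 * dist x y) (volume.withDensity (Gsp d s p f)) x
            + maximalR (2 * dist x y) (volume.withDensity (Gsp d s p f)) y))
    (hweak : ∀ lam : ℝ≥0∞, lam ≠ 0 →
      volume {x : Euc d | lam < maximal (volume.withDensity fun z => Gsp d s p f z ^ p) x}
        ≤ ENNReal.ofReal A₁ * (∫⁻ x, Gsp d s p f x ^ p ∂volume) / lam) :
    ∫⁻ ω, ENNReal.ofReal |f (X ω) - f (Xh ω)| ^ q ∂P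
      ≤ (ENNReal.ofReal ((2 * K₀) ^ q)
          + ENNReal.ofReal ((2 * (eLpNorm f ⊤ volume).toReal) ^ q) * ENNReal.ofReal A₁
            * (essSup pX volume + essSup pXh volume)
            * ∫⁻ x, Gsp d s p f x ^ p ∂volume)
        * (∫⁻ ω, edist (X ω) (Xh ω) ^ (q * s) ∂P) ^ (p / (q + p)) := by
  lift K₀ to ℝ≥0 using hK₀.le
  lift s to ℝ≥0 using hs0.le
  simp only [← Real.dist_eq, ← edist_dist]
  obtain hE | hE := eq_or_ne (∫⁻ ω, edist (X ω) (Xh ω) ^ (q * s) ∂P) 0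
  · have hXXh := ae_eq_of_lintegral_edist_rpow_eq_zero hX hXh (by positivity) hE
    rw [lintegral_congr_ae (g := fun _ => 0) (by filter_upwards [hXXh] with ω hω; simp [hω, hq]),
      lintegral_zero]
    exact zero_le
  refine le_add_mul_rpow_of_forall_le (by linarith) hq (ENNReal.ofReal_pos.2 (by positivity)).ne'
    hE fun lam hlam => ?_
  obtain ⟨T, hT, hTA, hf⟩ := exists_measure_le_holderOnWith_compl (μ := volume)
    (A := {x | maximal (volume.withDensity fun z => Gsp d s p f z ^ p) x ≤ lam})
    (by exact_mod_cast hs0) (by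
      filter_upwards [hpt] with x hx
      filter_upwards [hx] with y hxy hxA hyA
      exact edist_le_of_maximal_le hp (aemeasurable_Gsp hfLp.1.aemeasurable) hxA hyA hxy)
  have hTlam : volume T ≤ ENNReal.ofReal A₁ * (∫⁻ x, Gsp d s p f x ^ p ∂volume) / lam :=
    hTA.trans (by simpa [compl_ofPred, not_le] using hweak lam (by simpa using hlam.ne'))
  have hM := ae_edist_comp_le hfb hX.aemeasurable hXh.aemeasurable
    (hdX ▸ withDensity_absolutelyContinuous _ _) (hdXh ▸ withDensity_absolutelyContinuous _ _)
  refine (lintegral_edist_rpow_le_of_holderOnWith hX hXh hT hf hM hq.le).trans ?_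
  rw [coe_mul_rpow_one_div_rpow _ hlam.ne' hq.le,
    ENNReal.ofReal_rpow_of_nonneg (by positivity) hq.le, NNReal.coe_mul, NNReal.coe_ofNat]
  grw [measure_preimage_union_le_essSup_add_mul hX.aemeasurable hXh.aemeasurable hdX hdXh T, hTlam]
  simp only [div_eq_mul_inv]
  exact le_of_eq (by ring)

/-- Theorem 2.25 (case of bounded densities, `r = ∞`): Avikainen-type estimate for
essentially bounded fractional Sobolev functions `f ∈ W^{s,p}(ℝ^d)`:
`E[|f(X) − f(X̂)|^q] ≤ C (E[|X − X̂|^{qs}])^{p/(q+p)}` with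
`C = (2K₀(s,p))^q + (2‖f‖_∞)^q A₁ (‖p_X‖_∞ + ‖p_X̂‖_∞) ‖(G_{s,p}f)^p‖_{L¹}`. -/
theorem stmt_12 {d : ℕ} {Ω : Type*} [MeasurableSpace Ω] (P : Measure Ω) [IsProbabilityMeasure P]
    (s p q : ℝ) (hs0 : 0 < s) (hs1 : s < 1) (hp : 1 ≤ p) (hq : 0 < q)
    (X Xh : Ω → Euc d) (hX : Measurable X) (hXh : Measurable Xh)
    (pX pXh : Euc d → ℝ≥0∞)
    (hdX : P.map X = volume.withDensity pX)
    (hdXh : P.map Xh = volume.withDensity pXh)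
    (hbX : essSup pX volume ≠ ∞) (hbXh : essSup pXh volume ≠ ∞)
    (f : Euc d → ℝ) (hfLp : MemLp f (ENNReal.ofReal p) volume)
    (hfW : ∫⁻ x, Gsp d s p f x ^ p ∂volume ≠ ∞)
    (hfb : eLpNorm f ⊤ volume ≠ ∞)
    (K₀ A₁ : ℝ) (hK₀ : 0 < K₀) (hA₁ : 0 < A₁)
    (hpt : ∀ᵐ x ∂(volume : Measure (Euc d)), ∀ᵐ y ∂(volume : Measure (Euc d)),
      ENNReal.ofReal |f x - f y|
        ≤ ENNReal.ofReal (K₀ * dist x y ^ s)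
          * (maximalR (2 * dist x y) (volume.withDensity (Gsp d s p f)) x
            + maximalR (2 * dist x y) (volume.withDensity (Gsp d s p f)) y))
    (hweak : ∀ lam : ℝ≥0∞, lam ≠ 0 →
      volume {x : Euc d | lam < maximal (volume.withDensity fun z => Gsp d s p f z ^ p) x}
        ≤ ENNReal.ofReal A₁ * (∫⁻ x, Gsp d s p f x ^ p ∂volume) / lam) :
    ∫⁻ ω, ENNReal.ofReal |f (X ω) - f (Xh ω)| ^ q ∂P
      ≤ (ENNReal.ofReal ((2 * K₀) ^ q)
          + ENNReal.ofReal ((2 * (eLpNorm f ⊤ volume).toReal) ^ q) * ENNReal.ofReal A₁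
            * (essSup pX volume + essSup pXh volume)
            * ∫⁻ x, Gsp d s p f x ^ p ∂volume)
        * (∫⁻ ω, edist (X ω) (Xh ω) ^ (q * s) ∂P) ^ (p / (q + p)) :=
  stmt_12_general P s p q hs0 hp hq X Xh hX hXh pX pXh hdX hdXh f hfLp hfb K₀ A₁ hK₀ hpt hweak
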